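/- arXiv:2408.02515 — 5 statements merged into one kernel-verified Lean document; each statement's English description precedes it below -/
import Mathlib

section
/- Let ω_c > 0, p > 1, and let S : [0,∞) → ℝ be Lebesgue integrable with S(ω) = ω^p · G(ω) on [0, ω_c), where G is twice differentiable on [0, ω_c), G'' is bounded on [0, ω_c), and G(0) ≠ 0, G'(0) ≠ 0. Define Γ(t) = ∫₀^∞ S(ω)(1 − cos(ωt))/ω² dω for t ≥ 0. Then the integral Γ_∞ := ∫₀^∞ S(ω)/ω² dω is finite and Γ(t) → Γ_∞ as t → ∞. Moreover, if S(ω) ≥ 0 for all ω ≥ 0, then Γ_∞ > 0. -/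
/-!
Near `0` the integrand `S ω / ω²` equals `ω ^ (p - 2) G ω` with `G` continuous and
`p - 2 > -1`, and away from `0` it is dominated by `|S| / a²`, so `Γ_∞` is finite. Then
`Γ t = Γ_∞ - ∫ (S ω / ω²) cos (ω t)`, and the last integral tends to `0` by the
Riemann–Lebesgue lemma. If `S ≥ 0`, the integrand of `Γ_∞` is nonnegative and, since
`G 0 ≠ 0` and `G` is continuous, nonzero on a right neighbourhood of `0`.
-/

open MeasureTheory Real Filter Set Topology

theorem tendsto_integral_mul_cos_atTop {f : ℝ → ℝ} (hf : Integrable f) :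
    Tendsto (fun t => ∫ x, f x * cos (x * t)) atTop (𝓝 0) := by
  -- Mathlib's Fourier character is `𝐞 x = exp (2πix)`, hence the rescaling `t ↦ t / (2π)`.
  have hRL := ((Real.tendsto_integral_exp_smul_cocompact fun x => (f x : ℂ)).mono_left
    atTop_le_cocompact).comp (tendsto_id.atTop_div_const two_pi_pos)
  have hre := (Complex.continuous_re.tendsto 0).comp hRL
  rw [Complex.zero_re] at hre
  refine hre.congr fun t => ?_
  have hint : Integrable fun x => Real.fourierChar (-(x * (t / (2 * π)))) • (f x : ℂ) := by
    simpa [mul_comm] using (Real.fourierIntegral_convergent_iff (t / (2 * π))).2 hf.ofReal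
  simp only [Function.comp_apply, id]
  refine (integral_re hint).symm.trans (integral_congr_ae (Eventually.of_forall fun x => ?_))
  have harg : 2 * π * -(x * (t / (2 * π))) = -(x * t) := by field_simp
  change (Real.fourierChar _ • (f x : ℂ)).re = _
  rw [Circle.smul_def, smul_eq_mul, Real.fourierChar_apply, harg, Complex.mul_re,
    Complex.exp_ofReal_mul_I_re, Complex.exp_ofReal_mul_I_im]
  simp [mul_comm]

theorem tendsto_setIntegral_mul_one_sub_cos_atTop {f : ℝ → ℝ} {s : Set ℝ}
    (hs : MeasurableSet s) (hf : IntegrableOn f s) :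
    Tendsto (fun t => ∫ x in s, f x * (1 - cos (x * t))) atTop (𝓝 (∫ x in s, f x)) := by
  have hcos : ∀ t, IntegrableOn (fun x => f x * cos (x * t)) s := fun t =>
    hf.mul_bdd (by fun_prop) (Eventually.of_forall fun x => by simpa using abs_cos_le_one _)
  have hRL : Tendsto (fun t => ∫ x in s, f x * cos (x * t)) atTop (𝓝 0) := by
    refine (tendsto_integral_mul_cos_atTop ((integrable_indicator_iff hs).2 hf)).congr
      fun t => ?_
    rw [← integral_indicator hs]
    simp only [indicator_mul_left]
  simpa [mul_one_sub, integral_sub hf (hcos _)] using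
    (tendsto_const_nhds (x := ∫ x in s, f x)).sub hRL

theorem integrableOn_Ioi_div_sq_of_eq_rpow_mul {S G : ℝ → ℝ} {a p : ℝ} (hp : 1 < p)
    (ha : 0 < a) (hS : IntegrableOn S (Ioi 0)) (hG : ContinuousOn G (Icc 0 a))
    (hfact : ∀ ω ∈ Ioc 0 a, S ω = ω ^ p * G ω) :
    IntegrableOn (fun ω => S ω / ω ^ 2) (Ioi 0) := by
  rw [← Ioc_union_Ioi_eq_Ioi ha.le]
  refine IntegrableOn.union ?_ ?_
  · have hrpow : IntegrableOn (fun ω => ω ^ (p - 2) * G ω) (Ioc 0 a) :=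
      (intervalIntegral.intervalIntegrable_rpow' (by linarith : -1 < p - 2)).1
        |>.mul_continuousOn_of_subset hG measurableSet_Ioc isCompact_Icc Ioc_subset_Icc_self
    refine hrpow.congr_fun (fun ω hω => ?_) measurableSet_Ioc
    dsimp only
    rw [hfact ω hω, rpow_sub hω.1, rpow_two]
    field_simp
  · have hS' := hS.mono_set (Ioi_subset_Ioi ha.le)
    refine Integrable.mono' (hS'.norm.div_const (a ^ 2))
      (hS'.aemeasurable.div (by fun_prop)).aestronglyMeasurable ?_
    refine ae_restrict_of_forall_mem measurableSet_Ioi fun ω hω => ?_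
    rw [norm_div, norm_pow, Real.norm_of_nonneg (ha.trans hω).le]
    gcongr
    exact hω.le

theorem setIntegral_Ioi_pos_of_eventually_ne_zero {f : ℝ → ℝ} {a : ℝ}
    (hf : IntegrableOn f (Ioi a)) (hnn : ∀ x ∈ Ioi a, 0 ≤ f x)
    (hne : ∀ᶠ x in 𝓝[>] a, f x ≠ 0) : 0 < ∫ x in Ioi a, f x := by
  obtain ⟨b, hab, hb⟩ := mem_nhdsGT_iff_exists_Ioo_subset.1 hne
  rw [setIntegral_pos_iff_support_of_nonneg_ae
    (ae_restrict_of_forall_mem measurableSet_Ioi hnn) hf]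
  calc 0 < volume (Ioo a b) := by simpa using hab
    _ ≤ volume (Function.support f ∩ Ioi a) := measure_mono fun x hx => ⟨hb hx, hx.1⟩

theorem trushechkin_case_p_gt_one_general
    (ωc p : ℝ) (hωc : 0 < ωc) (hp : 1 < p)
    (S G G' : ℝ → ℝ)
    (hS_int : IntegrableOn S (Ici 0))
    (hfact : ∀ ω ∈ Ico 0 ωc, S ω = ω ^ p * G ω)
    (hG' : ∀ ω ∈ Ico 0 ωc, HasDerivWithinAt G (G' ω) (Ico 0 ωc) ω)
    (hG0 : G 0 ≠ 0) :
    IntegrableOn (fun ω => S ω / ω ^ 2) (Ioi 0) ∧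
    Tendsto (fun t : ℝ => ∫ ω in Ioi (0:ℝ), S ω * (1 - Real.cos (ω * t)) / ω ^ 2)
      atTop (nhds (∫ ω in Ioi (0:ℝ), S ω / ω ^ 2)) ∧
    ((∀ ω ≥ (0:ℝ), 0 ≤ S ω) → 0 < ∫ ω in Ioi (0:ℝ), S ω / ω ^ 2) := by
  have hGc : ContinuousOn G (Ico 0 ωc) := fun ω hω => (hG' ω hω).continuousWithinAt
  have hhalf : ωc / 2 < ωc := half_lt_self hωc
  have hint : IntegrableOn (fun ω => S ω / ω ^ 2) (Ioi 0) :=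
    integrableOn_Ioi_div_sq_of_eq_rpow_mul hp (half_pos hωc)
      (hS_int.mono_set Ioi_subset_Ici_self) (hGc.mono (Icc_subset_Ico_right hhalf))
      fun ω hω => hfact ω ⟨hω.1.le, hω.2.trans_lt hhalf⟩
  refine ⟨hint, ?_, fun hS => ?_⟩
  · refine (tendsto_setIntegral_mul_one_sub_cos_atTop measurableSet_Ioi hint).congr fun t => ?_
    exact integral_congr_ae (Eventually.of_forall fun ω => by ring)
  · have hGne : ∀ᶠ ω in 𝓝[>] 0, G ω ≠ 0 :=
      ((hGc 0 ⟨le_rfl, hωc⟩).tendsto.eventually_ne hG0).filter_mono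
        ((nhdsWithin_Ioo_eq_nhdsGT hωc).symm.trans_le (nhdsWithin_mono _ Ioo_subset_Ico_self))
    refine setIntegral_Ioi_pos_of_eventually_ne_zero hint
      (fun ω hω => div_nonneg (hS ω (le_of_lt hω)) (sq_nonneg ω)) ?_
    filter_upwards [hGne, Ioo_mem_nhdsGT hωc] with ω hGω hω
    have hω0 : 0 < ω := hω.1
    rw [hfact ω (Ioo_subset_Ico_self hω)]
    positivity

/-- **Trushechkin's theorem, case `p > 1`.**
If `S` is integrable on `[0,∞)` and factors as `S ω = ω^p G ω` on `[0, ω_c)` with `G` twice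
differentiable on `[0, ω_c)`, `G''` bounded there, and `G 0 ≠ 0`, `G' 0 ≠ 0`, then
`Γ_∞ = ∫₀^∞ S ω / ω² dω` is finite (the integrand is integrable), the decoherence exponent
`Γ t = ∫₀^∞ S ω (1 - cos (ω t)) / ω² dω` converges to `Γ_∞` as `t → ∞`, and if moreover
`S ≥ 0` then `Γ_∞ > 0`. -/
theorem trushechkin_case_p_gt_one
    (ωc p : ℝ) (hωc : 0 < ωc) (hp : 1 < p)
    (S G G' G'' : ℝ → ℝ)
    (hS_int : IntegrableOn S (Ici 0))
    (hfact : ∀ ω ∈ Ico 0 ωc, S ω = ω ^ p * G ω)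
    (hG' : ∀ ω ∈ Ico 0 ωc, HasDerivWithinAt G (G' ω) (Ico 0 ωc) ω)
    (hG'' : ∀ ω ∈ Ico 0 ωc, HasDerivWithinAt G' (G'' ω) (Ico 0 ωc) ω)
    (hG''bd : ∃ M : ℝ, ∀ ω ∈ Ico 0 ωc, |G'' ω| ≤ M)
    (hG0 : G 0 ≠ 0) (hG'0 : G' 0 ≠ 0) :
    IntegrableOn (fun ω => S ω / ω ^ 2) (Ioi 0) ∧
    Tendsto (fun t : ℝ => ∫ ω in Ioi (0:ℝ), S ω * (1 - Real.cos (ω * t)) / ω ^ 2)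
      atTop (nhds (∫ ω in Ioi (0:ℝ), S ω / ω ^ 2)) ∧
    ((∀ ω ≥ (0:ℝ), 0 ≤ S ω) → 0 < ∫ ω in Ioi (0:ℝ), S ω / ω ^ 2) :=
  trushechkin_case_p_gt_one_general ωc p hωc hp S G G' hS_int hfact hG' hG0
end

section
/- Let ω_c > 0, 0 < p < 1, and let S : [0,∞) → ℝ be Lebesgue integrable with S(ω) = ω^p · G(ω) on [0, ω_c), where G is twice differentiable on [0, ω_c), G'' is bounded on [0, ω_c), and G(0) ≠ 0, G'(0) ≠ 0. Define Γ(t) = ∫₀^∞ S(ω)(1 − cos(ωt))/ω² dω for t ≥ 0. Then there exist constants C₂, C₃ ∈ ℝ such that Γ(t) − C₂ − G(0)·C₃·t^{1−p} → 0 as t → ∞; moreover, if S(ω) ≥ 0 for all ω ≥ 0, then G(0)·C₃ > 0. -/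
/-!
On `(0, ∞)` write `S ω / ω² = G 0 · ω^(p-2) + h ω`. Since `G ω - G 0 = O(ω)` near `0`
(a bound on `G''` bounds `G'`) and `p < 1`, the remainder `h` is integrable on `(0, ∞)`, so by
the Riemann–Lebesgue lemma `∫ h (1 - cos (ω t)) → ∫ h =: C₂`. The model term scales exactly:
`∫ ω^(p-2) (1 - cos (ω t)) dω = t^(1-p) C₃` with `C₃ = ∫ u^(p-2) (1 - cos u) du > 0`, and
`S ≥ 0` forces `G 0 ≥ 0` by continuity of `G` at `0`.
-/

open MeasureTheory Real Filter Set Topology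

theorem tendsto_setIntegral_mul_cos_atTop {f : ℝ → ℝ} {s : Set ℝ} (hs : MeasurableSet s)
    (hf : IntegrableOn f s) : Tendsto (fun t => ∫ x in s, f x * cos (x * t)) atTop (𝓝 0) := by
  refine (tendsto_integral_mul_cos_atTop (hf.integrable_indicator hs)).congr fun t => ?_
  simp only [← integral_indicator hs, indicator_mul_left]

theorem abs_sub_le_of_hasDerivWithinAt_Ico {f f' : ℝ → ℝ} {a b C : ℝ}
    (hf : ∀ x ∈ Ico a b, HasDerivWithinAt f (f' x) (Ico a b) x)
    (hC : ∀ x ∈ Ico a b, |f' x| ≤ C) {x : ℝ} (hx : x ∈ Ico a b) :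
    |f x - f a| ≤ C * (x - a) := by
  simpa only [Real.norm_eq_abs, abs_of_nonneg (sub_nonneg.2 hx.1)] using
    (convex_Ico a b).norm_image_sub_le_of_norm_hasDerivWithin_le hf hC
      (left_mem_Ico.2 (hx.1.trans_lt hx.2)) hx

theorem exists_abs_sub_le_mul_of_abs_deriv2_le {f f' f'' : ℝ → ℝ} {a b M : ℝ}
    (hf : ∀ x ∈ Ico a b, HasDerivWithinAt f (f' x) (Ico a b) x)
    (hf' : ∀ x ∈ Ico a b, HasDerivWithinAt f' (f'' x) (Ico a b) x)
    (hM : ∀ x ∈ Ico a b, |f'' x| ≤ M) :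
    ∃ K, ∀ x ∈ Ico a b, |f x - f a| ≤ K * (x - a) := by
  refine ⟨|f' a| + M * (b - a), fun x hx => abs_sub_le_of_hasDerivWithinAt_Ico hf ?_ hx⟩
  intro y hy
  have hM0 : 0 ≤ M := (abs_nonneg _).trans (hM y hy)
  have := abs_sub_le_of_hasDerivWithinAt_Ico hf' hM hy
  nlinarith [abs_sub_abs_le_abs_sub (f' y) (f' a), hy.2]

theorem nonneg_at_zero_of_rpow_mul_nonneg {G : ℝ → ℝ} {a p : ℝ} (ha : 0 < a)
    (hG : ContinuousWithinAt G (Ioo 0 a) 0) (h : ∀ ω ∈ Ioo 0 a, 0 ≤ ω ^ p * G ω) :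
    0 ≤ G 0 := by
  have hmem : G 0 ∈ closure (G '' Ioo 0 a) :=
    hG.mem_closure_image (by rw [closure_Ioo ha.ne]; exact left_mem_Icc.2 ha.le)
  refine isClosed_Ici.closure_subset_iff.2 ?_ hmem
  rintro _ ⟨ω, hω, rfl⟩
  exact (mul_nonneg_iff_of_pos_left (rpow_pos_of_pos hω.1 p)).1 (h ω hω)

theorem integrableOn_rpow_mul_one_sub_cos {p : ℝ} (hp0 : -1 < p) (hp1 : p < 1) :
    IntegrableOn (fun u => u ^ (p - 2) * (1 - cos u)) (Ioi 0) := by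
  have hmeas : ∀ s, AEStronglyMeasurable (fun u : ℝ => u ^ (p - 2) * (1 - cos u))
      (volume.restrict s) := fun s => (by fun_prop : Measurable _).aestronglyMeasurable
  have hnear : IntegrableOn (fun u => u ^ (p - 2) * (1 - cos u)) (Ioo 0 1) := by
    refine (((intervalIntegral.integrableOn_Ioo_rpow_iff one_pos).2 hp0).const_mul (1 / 2)).mono'
      (hmeas _) ((ae_restrict_iff' measurableSet_Ioo).2 (ae_of_all _ fun u hu => ?_))
    have hcos : 1 - cos u ≤ u ^ 2 / 2 := by linarith [one_sub_sq_div_two_le_cos (x := u)]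
    have hpow := rpow_nonneg hu.1.le (p - 2)
    rw [norm_of_nonneg (mul_nonneg hpow (by linarith [cos_le_one u]))]
    calc u ^ (p - 2) * (1 - cos u) ≤ u ^ (p - 2) * (u ^ 2 / 2) := by gcongr
      _ = 1 / 2 * u ^ p := by
        rw [← rpow_natCast, mul_div_assoc', ← rpow_add hu.1]; norm_num; ring
  have hfar : IntegrableOn (fun u => u ^ (p - 2) * (1 - cos u)) (Ici 1) := by
    rw [integrableOn_Ici_iff_integrableOn_Ioi]
    refine ((integrableOn_Ioi_rpow_of_lt (by linarith : p - 2 < -1) one_pos).const_mul 2).mono'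
      (hmeas _) ((ae_restrict_iff' measurableSet_Ioi).2 (ae_of_all _ fun u hu => ?_))
    have hu : (0 : ℝ) < u := one_pos.trans hu
    have hpow := rpow_pos_of_pos hu (p - 2)
    rw [norm_of_nonneg (mul_nonneg hpow.le (by linarith [cos_le_one u]))]
    nlinarith [neg_one_le_cos u]
  rw [← Ioo_union_Ici_eq_Ioi one_pos]
  exact hnear.union hfar

theorem rpow_mul_one_sub_cos_mul_eq {p t ω : ℝ} (ht : 0 < t) (hω : 0 < ω) :
    ω ^ (p - 2) * (1 - cos (ω * t)) =
      t ^ (2 - p) * ((ω * t) ^ (p - 2) * (1 - cos (ω * t))) := by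
  have htt : t ^ (2 - p) * t ^ (p - 2) = 1 := by rw [← rpow_add ht]; simp
  rw [mul_rpow hω.le ht.le]
  linear_combination -(ω ^ (p - 2) * (1 - cos (ω * t))) * htt

theorem integrableOn_rpow_mul_one_sub_cos_mul {p t : ℝ} (hp0 : -1 < p) (hp1 : p < 1)
    (ht : 0 < t) : IntegrableOn (fun ω => ω ^ (p - 2) * (1 - cos (ω * t))) (Ioi 0) := by
  have hscaled :=
    (integrableOn_Ioi_comp_mul_right_iff (fun u => u ^ (p - 2) * (1 - cos u)) 0 ht).2
      (by simpa using integrableOn_rpow_mul_one_sub_cos hp0 hp1)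
  exact IntegrableOn.congr_fun (hscaled.const_mul (t ^ (2 - p)))
    (fun ω hω => (rpow_mul_one_sub_cos_mul_eq ht hω).symm) measurableSet_Ioi

theorem integral_rpow_mul_one_sub_cos_mul (p : ℝ) {t : ℝ} (ht : 0 < t) :
    ∫ ω in Ioi 0, ω ^ (p - 2) * (1 - cos (ω * t)) =
      t ^ (1 - p) * ∫ u in Ioi 0, u ^ (p - 2) * (1 - cos u) := by
  rw [setIntegral_congr_fun measurableSet_Ioi (fun ω hω => rpow_mul_one_sub_cos_mul_eq ht hω),
    integral_const_mul, integral_comp_mul_right_Ioi (fun u => u ^ (p - 2) * (1 - cos u)) 0 ht,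
    zero_mul, smul_eq_mul, ← mul_assoc, ← rpow_neg_one, ← rpow_add ht]
  ring_nf

theorem integral_rpow_mul_one_sub_cos_pos {p : ℝ} (hp0 : -1 < p) (hp1 : p < 1) :
    0 < ∫ u in Ioi 0, u ^ (p - 2) * (1 - cos u) := by
  have hnonneg : ∀ u ∈ Ioi (0 : ℝ), 0 ≤ u ^ (p - 2) * (1 - cos u) := fun u hu =>
    mul_nonneg (rpow_nonneg (le_of_lt hu) _) (by linarith [cos_le_one u])
  rw [setIntegral_pos_iff_support_of_nonneg_ae
    ((ae_restrict_iff' measurableSet_Ioi).2 (ae_of_all _ hnonneg))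
    (integrableOn_rpow_mul_one_sub_cos hp0 hp1)]
  have hsub :
      Ioo 0 (2 * π) ⊆ Function.support (fun u => u ^ (p - 2) * (1 - cos u)) ∩ Ioi 0 := by
    intro u hu
    have hcos : cos u ≠ 1 := fun h =>
      hu.1.ne' ((cos_eq_one_iff_of_lt_of_lt (by linarith [hu.1, pi_pos]) hu.2).1 h)
    exact ⟨mul_ne_zero (rpow_pos_of_pos hu.1 _).ne' (sub_ne_zero.2 hcos.symm), hu.1⟩
  refine lt_of_lt_of_le ?_ (measure_mono hsub)
  rw [Real.volume_Ioo, ENNReal.ofReal_pos]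
  linarith [pi_pos]

theorem integrableOn_div_sq_sub_rpow {S : ℝ → ℝ} {a c K p : ℝ} (ha : 0 < a) (hp0 : 0 < p)
    (hp1 : p < 1) (hS : IntegrableOn S (Ioi 0))
    (hnear : ∀ ω ∈ Ioo 0 a, |S ω - c * ω ^ p| ≤ K * ω ^ (p + 1)) :
    IntegrableOn (fun ω => S ω / ω ^ 2 - c * ω ^ (p - 2)) (Ioi 0) := by
  have hsq_meas : ∀ s, AEStronglyMeasurable (fun ω : ℝ => ω ^ 2) (volume.restrict s) :=
    fun s => (by fun_prop : Measurable fun ω : ℝ => ω ^ 2).aestronglyMeasurable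
  have hmeas : AEStronglyMeasurable (fun ω => S ω / ω ^ 2 - c * ω ^ (p - 2))
      (volume.restrict (Ioi 0)) :=
    (hS.aestronglyMeasurable.div₀ (hsq_meas _)).sub
      (by fun_prop : Measurable fun ω : ℝ => c * ω ^ (p - 2)).aestronglyMeasurable
  have hnear' : IntegrableOn (fun ω => S ω / ω ^ 2 - c * ω ^ (p - 2)) (Ioo 0 a) := by
    have hpow := (intervalIntegral.integrableOn_Ioo_rpow_iff ha).2 (by linarith : -1 < p - 1)
    refine (hpow.const_mul K).mono' (hmeas.mono_set Ioo_subset_Ioi_self)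
      ((ae_restrict_iff' measurableSet_Ioo).2 (ae_of_all _ fun ω hω => ?_))
    have hsq : (0 : ℝ) < ω ^ 2 := pow_pos hω.1 2
    have hdiv : ∀ q : ℝ, ω ^ q / ω ^ 2 = ω ^ (q - 2) := fun q => by
      rw [← rpow_natCast, ← rpow_sub hω.1]; norm_num
    rw [norm_eq_abs, ← hdiv p, ← mul_div_assoc, ← sub_div, abs_div, abs_of_pos hsq,
      show p - 1 = p + 1 - 2 by ring, ← hdiv, mul_div_assoc']
    exact div_le_div_of_nonneg_right (hnear ω hω) hsq.le
  have hfar : IntegrableOn (fun ω => S ω / ω ^ 2 - c * ω ^ (p - 2)) (Ici a) := by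
    have hSa : IntegrableOn S (Ici a) := hS.mono_set (Ici_subset_Ioi.2 ha)
    have hSdiv : IntegrableOn (fun ω => S ω / ω ^ 2) (Ici a) := by
      refine (hSa.norm.div_const (a ^ 2)).mono'
        (hSa.aestronglyMeasurable.div₀ (hsq_meas _))
        ((ae_restrict_iff' measurableSet_Ici).2 (ae_of_all _ fun ω hω => ?_))
      rw [norm_div, norm_of_nonneg (sq_nonneg ω)]
      gcongr
      exact hω
    have hpow : IntegrableOn (fun ω : ℝ => ω ^ (p - 2)) (Ici a) :=
      (integrableOn_Ici_iff_integrableOn_Ioi).mpr (integrableOn_Ioi_rpow_of_lt (by linarith) ha)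
    exact hSdiv.sub (hpow.const_mul c)
  rw [← Ioo_union_Ici_eq_Ioi ha]
  exact hnear'.union hfar

theorem integral_mul_one_sub_cos_div_sq_eq {S h : ℝ → ℝ} {c p t : ℝ} (hp0 : -1 < p)
    (hp1 : p < 1) (ht : 0 < t) (hS : ∀ ω ∈ Ioi 0, S ω / ω ^ 2 = c * ω ^ (p - 2) + h ω)
    (hh : IntegrableOn h (Ioi 0)) :
    ∫ ω in Ioi 0, S ω * (1 - cos (ω * t)) / ω ^ 2 =
      c * (∫ u in Ioi 0, u ^ (p - 2) * (1 - cos u)) * t ^ (1 - p) + (∫ ω in Ioi 0, h ω)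
        - ∫ ω in Ioi 0, h ω * cos (ω * t) := by
  have hhcos : IntegrableOn (fun ω => h ω * cos (ω * t)) (Ioi 0) :=
    hh.mul_bdd (by fun_prop : Continuous fun ω => cos (ω * t)).aestronglyMeasurable
      (ae_of_all _ fun ω => (norm_eq_abs _).trans_le (abs_cos_le_one _))
  have hrest : IntegrableOn (fun ω => h ω - h ω * cos (ω * t)) (Ioi 0) := hh.sub hhcos
  have hsplit : ∀ ω ∈ Ioi (0 : ℝ), S ω * (1 - cos (ω * t)) / ω ^ 2 =
      c * (ω ^ (p - 2) * (1 - cos (ω * t))) + (h ω - h ω * cos (ω * t)) := fun ω hω => by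
    rw [mul_div_right_comm, hS ω hω]; ring
  rw [setIntegral_congr_fun measurableSet_Ioi hsplit,
    integral_add ((integrableOn_rpow_mul_one_sub_cos_mul hp0 hp1 ht).const_mul c) hrest,
    integral_const_mul, integral_sub hh hhcos, integral_rpow_mul_one_sub_cos_mul p ht]
  ring

theorem trushechkin_case_p_between_zero_one_general
    (ωc p : ℝ) (hωc : 0 < ωc) (hp0 : 0 < p) (hp1 : p < 1)
    (S G G' G'' : ℝ → ℝ)
    (hS_int : IntegrableOn S (Ici 0))
    (hfact : ∀ ω ∈ Ico 0 ωc, S ω = ω ^ p * G ω)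
    (hG' : ∀ ω ∈ Ico 0 ωc, HasDerivWithinAt G (G' ω) (Ico 0 ωc) ω)
    (hG'' : ∀ ω ∈ Ico 0 ωc, HasDerivWithinAt G' (G'' ω) (Ico 0 ωc) ω)
    (hG''bd : ∃ M : ℝ, ∀ ω ∈ Ico 0 ωc, |G'' ω| ≤ M)
    (hG0 : G 0 ≠ 0) :
    ∃ C₂ C₃ : ℝ,
      Tendsto (fun t : ℝ =>
          (∫ ω in Ioi (0:ℝ), S ω * (1 - Real.cos (ω * t)) / ω ^ 2)
            - C₂ - G 0 * C₃ * t ^ (1 - p))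
        atTop (nhds 0) ∧
      ((∀ ω ≥ (0:ℝ), 0 ≤ S ω) → 0 < G 0 * C₃) := by
  obtain ⟨M, hM⟩ := hG''bd
  obtain ⟨K, hK⟩ := exists_abs_sub_le_mul_of_abs_deriv2_le hG' hG'' hM
  have hnear : ∀ ω ∈ Ioo 0 ωc, |S ω - G 0 * ω ^ p| ≤ K * ω ^ (p + 1) := fun ω hω => by
    have hωp := rpow_pos_of_pos hω.1 p
    rw [hfact ω (Ioo_subset_Ico_self hω),
      show ω ^ p * G ω - G 0 * ω ^ p = ω ^ p * (G ω - G 0) by ring, abs_mul, abs_of_pos hωp,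
      rpow_add_one hω.1.ne']
    calc ω ^ p * |G ω - G 0| ≤ ω ^ p * (K * ω) := by
          gcongr; simpa using hK ω (Ioo_subset_Ico_self hω)
      _ = K * (ω ^ p * ω) := by ring
  have hh :=
    integrableOn_div_sq_sub_rpow hωc hp0 hp1 (hS_int.mono_set Ioi_subset_Ici_self) hnear
  refine ⟨∫ ω in Ioi 0, (S ω / ω ^ 2 - G 0 * ω ^ (p - 2)),
    ∫ u in Ioi 0, u ^ (p - 2) * (1 - cos u), ?_, fun hS => ?_⟩
  · have hRL := (tendsto_setIntegral_mul_cos_atTop measurableSet_Ioi hh).neg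
    rw [neg_zero] at hRL
    refine hRL.congr' ?_
    filter_upwards [eventually_gt_atTop 0] with t ht
    rw [integral_mul_one_sub_cos_div_sq_eq (by linarith) hp1 ht (fun ω _ => by ring) hh]
    ring
  · have hG0_nonneg : 0 ≤ G 0 := nonneg_at_zero_of_rpow_mul_nonneg hωc
      ((hG' 0 (left_mem_Ico.2 hωc)).continuousWithinAt.mono Ioo_subset_Ico_self)
      (fun ω hω => hfact ω (Ioo_subset_Ico_self hω) ▸ hS ω hω.1.le)
    exact mul_pos (hG0_nonneg.lt_of_ne' hG0)
      (integral_rpow_mul_one_sub_cos_pos (by linarith) hp1)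

/-- **Trushechkin's theorem, case `0 < p < 1`.**
If `S` is integrable on `[0,∞)` and factors as `S ω = ω^p G ω` on `[0, ω_c)` with `G` twice
differentiable on `[0, ω_c)`, `G''` bounded there, and `G 0 ≠ 0`, `G' 0 ≠ 0`, then there are
constants `C₂, C₃` such that `Γ t - C₂ - G 0 · C₃ · t^(1-p) → 0` as `t → ∞`, where
`Γ t = ∫₀^∞ S ω (1 - cos (ω t)) / ω² dω`; moreover if `S ≥ 0` then `G 0 · C₃ > 0`. -/
theorem trushechkin_case_p_between_zero_one
    (ωc p : ℝ) (hωc : 0 < ωc) (hp0 : 0 < p) (hp1 : p < 1)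
    (S G G' G'' : ℝ → ℝ)
    (hS_int : IntegrableOn S (Ici 0))
    (hfact : ∀ ω ∈ Ico 0 ωc, S ω = ω ^ p * G ω)
    (hG' : ∀ ω ∈ Ico 0 ωc, HasDerivWithinAt G (G' ω) (Ico 0 ωc) ω)
    (hG'' : ∀ ω ∈ Ico 0 ωc, HasDerivWithinAt G' (G'' ω) (Ico 0 ωc) ω)
    (hG''bd : ∃ M : ℝ, ∀ ω ∈ Ico 0 ωc, |G'' ω| ≤ M)
    (hG0 : G 0 ≠ 0) (hG'0 : G' 0 ≠ 0) :
    ∃ C₂ C₃ : ℝ,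
      Tendsto (fun t : ℝ =>
          (∫ ω in Ioi (0:ℝ), S ω * (1 - Real.cos (ω * t)) / ω ^ 2)
            - C₂ - G 0 * C₃ * t ^ (1 - p))
        atTop (nhds 0) ∧
      ((∀ ω ≥ (0:ℝ), 0 ≤ S ω) → 0 < G 0 * C₃) :=
  trushechkin_case_p_between_zero_one_general ωc p hωc hp0 hp1 S G G' G'' hS_int hfact hG' hG''
    hG''bd hG0
end

section
/- For every real x ≥ 0, the sequence L_n(x/n) converges as n → ∞ to (1/(2π)) ∫_{−π}^{π} cos(2√x · sin θ) dθ, i.e. lim_{n→∞} L_n(x/n) = J₀(2√x), where J₀ is the Bessel function of the first kind of order zero given by the stated integral. -/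
/-!
Expanding, `L_n(x/n) = ∑ₖ C(n,k) (-x/n)^k / k!`. Since `C(n,k) / n^k → 1/k!` and
`C(n,k) / n^k ≤ 1/k!`, Tannery's theorem gives `L_n(x/n) → ∑ₖ (-x)^k / (k!)²`. On the Bessel side,
expanding `cos` in its power series and integrating term by term, the Wallis integrals
`∫_{-π}^{π} sin^{2m} = 2π (2m)! / (4^m (m!)²)` turn `J₀(a)` into `∑ₘ (-a²/4)^m / (m!)²`.
-/

open Filter Real

/-- The `n`-th Laguerre polynomial, `L_n(x) = Σ_{k=0}^{n} (n choose k) (−x)^k / k!`. -/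
noncomputable def laguerre (n : ℕ) (x : ℝ) : ℝ :=
  ∑ k ∈ Finset.range (n + 1), (n.choose k : ℝ) * (-x) ^ k / (Nat.factorial k : ℝ)

open Finset Nat Topology MeasureTheory

theorem prod_range_two_mul_add_one_div_two_mul_add_two (m : ℕ) :
    ∏ i ∈ range m, (2 * (i : ℝ) + 1) / (2 * i + 2) = (2 * m)! / (4 ^ m * (m ! : ℝ) ^ 2) := by
  induction m with
  | zero => simp
  | succ m ih =>
    rw [prod_range_succ, ih, show 2 * (m + 1) = 2 * m + 1 + 1 by ring]
    push_cast [factorial_succ]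
    field_simp
    ring

theorem integral_sin_pow_even_neg_pi_pi (m : ℕ) :
    ∫ θ in (-π)..π, sin θ ^ (2 * m) = 2 * π * (2 * m)! / (4 ^ m * (m ! : ℝ) ^ 2) := by
  have hper : Function.Periodic (fun θ => sin θ ^ (2 * m)) π := fun θ => by
    simp only [sin_add_pi, (even_two_mul m).neg_pow]
  have hcont : Continuous (fun θ => sin θ ^ (2 * m)) := by fun_prop
  have hleft : ∫ θ in (-π)..0, sin θ ^ (2 * m) = ∫ θ in 0..π, sin θ ^ (2 * m) := by
    simpa using hper.intervalIntegral_add_eq (-π) 0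
  rw [← intervalIntegral.integral_add_adjacent_intervals (b := 0) (hcont.intervalIntegrable _ _)
    (hcont.intervalIntegrable _ _), hleft, integral_sin_pow_even,
    prod_range_two_mul_add_one_div_two_mul_add_two]
  ring

noncomputable def besselJ0 (a : ℝ) : ℝ :=
  (1 / (2 * π)) * ∫ θ in (-π)..π, cos (a * sin θ)

theorem hasSum_besselJ0 (a : ℝ) :
    HasSum (fun m : ℕ => (-(a ^ 2 / 4)) ^ m / (m ! : ℝ) ^ 2) (besselJ0 a) := by
  have hbound_sum : Summable fun m : ℕ => |a| ^ (2 * m) / ((2 * m)! : ℝ) :=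
    (Real.hasSum_cosh |a|).summable
  have hterms : HasSum
      (fun m : ℕ => ∫ θ in (-π)..π, (-1) ^ m * (a * sin θ) ^ (2 * m) / ((2 * m)! : ℝ))
      (∫ θ in (-π)..π, cos (a * sin θ)) := by
    refine intervalIntegral.hasSum_integral_of_dominated_convergence
      (fun m _ => |a| ^ (2 * m) / ((2 * m)! : ℝ)) (fun m => by fun_prop) (fun m => ?_)
      (ae_of_all _ fun _ _ => hbound_sum) intervalIntegrable_const
      (ae_of_all _ fun θ _ => Real.hasSum_cos (a * sin θ))
    refine ae_of_all _ fun θ _ => ?_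
    rw [norm_div, norm_mul, norm_pow, norm_pow, norm_neg, norm_one, one_pow, one_mul,
      Real.norm_natCast, norm_mul, Real.norm_eq_abs, Real.norm_eq_abs]
    gcongr
    exact mul_le_of_le_one_right (abs_nonneg a) (abs_sin_le_one θ)
  have hterm (m : ℕ) : ∫ θ in (-π)..π, (-1) ^ m * (a * sin θ) ^ (2 * m) / ((2 * m)! : ℝ) =
      2 * π * ((-(a ^ 2 / 4)) ^ m / (m ! : ℝ) ^ 2) := by
    have hpull : (fun θ => (-1) ^ m * (a * sin θ) ^ (2 * m) / ((2 * m)! : ℝ)) =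
        fun θ => (-1) ^ m * a ^ (2 * m) / ((2 * m)! : ℝ) * sin θ ^ (2 * m) := by
      ext θ; ring
    rw [hpull, intervalIntegral.integral_const_mul, integral_sin_pow_even_neg_pi_pi,
      neg_pow (a ^ 2 / 4), div_pow, ← pow_mul]
    field_simp
  simp_rw [hterm] at hterms
  have h2π : 2 * π ≠ 0 := by positivity
  simpa only [besselJ0, one_div, inv_mul_cancel_left₀ h2π] using hterms.mul_left (2 * π)⁻¹

theorem laguerre_eq_tsum (n : ℕ) (x : ℝ) :
    laguerre n x = ∑' k, (n.choose k : ℝ) * (-x) ^ k / k ! := by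
  refine (tsum_eq_sum fun k hk => ?_).symm
  rw [choose_eq_zero_of_lt (by simpa using hk), cast_zero, zero_mul, zero_div]

theorem summable_pow_div_factorial_sq (x : ℝ) : Summable fun k : ℕ => x ^ k / (k ! : ℝ) ^ 2 := by
  refine (Real.summable_pow_div_factorial |x|).of_norm_bounded fun k => ?_
  have hfac : (1 : ℝ) ≤ k ! := one_le_cast.2 k.factorial_pos
  rw [norm_div, norm_pow, Real.norm_eq_abs, norm_pow, Real.norm_natCast]
  gcongr
  exact le_self_pow₀ hfac two_ne_zero

theorem tendsto_laguerre_div (x : ℝ) :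
    Tendsto (fun n : ℕ => laguerre n (x / n)) atTop (𝓝 (∑' k, (-x) ^ k / (k ! : ℝ) ^ 2)) := by
  simp_rw [laguerre_eq_tsum]
  refine tendsto_tsum_of_dominated_convergence (summable_pow_div_factorial_sq |x|) (fun k => ?_)
    (.of_forall fun n k => ?_)
  · have hmul : Tendsto (fun n : ℕ => (n : ℝ) * -(x / n)) atTop (𝓝 (-x)) := by
      refine tendsto_const_nhds.congr' ?_
      filter_upwards [eventually_ne_atTop 0] with n hn
      field_simp
    simpa only [pow_two, ← div_div, mul_div_assoc] using
      (ProbabilityTheory.tendsto_choose_mul_pow_atTop k hmul).div_const (k ! : ℝ)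
  · have hnx : (n : ℝ) * (|x| / n) ≤ |x| := by
      rcases eq_or_ne n 0 with rfl | hn
      · simp
      · rw [mul_div_cancel₀ _ (cast_ne_zero.2 hn)]
    calc ‖(n.choose k : ℝ) * (-(x / n)) ^ k / (k ! : ℝ)‖ = n.choose k * (|x| / n) ^ k / k ! := by
          rw [norm_div, norm_mul, norm_pow, norm_neg, Real.norm_natCast, Real.norm_natCast,
            Real.norm_eq_abs, abs_div, Nat.abs_cast]
      _ ≤ (n : ℝ) ^ k / k ! * (|x| / n) ^ k / k ! := by gcongr; exact choose_le_pow_div k n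
      _ = ((n : ℝ) * (|x| / n)) ^ k / (k ! : ℝ) ^ 2 := by ring
      _ ≤ |x| ^ k / (k ! : ℝ) ^ 2 := by gcongr

/-- For `x ≥ 0`, `L_n(x/n) → J₀(2√x) = (1/(2π)) ∫_{−π}^{π} cos(2√x sin θ) dθ` as `n → ∞`. -/
theorem laguerre_scaled_tendsto_besselJ0 (x : ℝ) (hx : 0 ≤ x) :
    Tendsto (fun n : ℕ => laguerre n (x / n)) atTop
      (nhds ((1 / (2 * π)) *
        ∫ θ in (-π)..π, Real.cos (2 * Real.sqrt x * Real.sin θ))) := by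
  have hJ : ∑' k, (-x) ^ k / (k ! : ℝ) ^ 2 = besselJ0 (2 * √x) := by
    rw [← (hasSum_besselJ0 _).tsum_eq, mul_pow, sq_sqrt hx, show (2 : ℝ) ^ 2 * x / 4 = x by ring]
  change Tendsto _ atTop (𝓝 (besselJ0 (2 * √x)))
  exact hJ ▸ tendsto_laguerre_div x
end

section
/- Let β' > 0, let ω : ℝ³ → ℝ be measurable with ω(k) > 0 for almost every k, and let h : ℝ³ → ℂ be measurable with ∫_{ℝ³} |h(k)|² dk < ∞ and ∫_{ℝ³} |h(k)|²/ω(k) dk < ∞. Then lim_{ε → 0⁺} ε ∫_{ℝ³} coth(β'·ε·ω(k)/2)·|h(k)|² dk = (2/β') ∫_{ℝ³} |h(k)|²/ω(k) dk, where coth(x) = cosh(x)/sinh(x). -/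
open MeasureTheory Real Filter

/-- The hyperbolic cotangent, `coth x = cosh x / sinh x`. -/
noncomputable def Real.coth (x : ℝ) : ℝ := Real.cosh x / Real.sinh x

/-!
With `φ t = t coth t`, the integrand is `ε coth (ε ω) |h|² = φ (ε ω) · |h|² / ω`.
Since `φ t → 1` as `t → 0⁺` and `φ t ≤ t + 1` (equivalently `t e⁻ᵗ ≤ sinh t`), the integrands
converge pointwise to `|h|² / ω` and, for `ε ≤ 1`, are dominated by `|h|² + |h|² / ω`;
dominated convergence gives the limit.
-/

open scoped Topology

namespace Real

theorem measurable_coth : Measurable coth :=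
  measurable_cosh.div measurable_sinh

theorem coth_pos {x : ℝ} (hx : 0 < x) : 0 < coth x :=
  div_pos (cosh_pos x) (sinh_pos_iff.mpr hx)

theorem mul_exp_neg_le_sinh (x : ℝ) : x * exp (-x) ≤ sinh x := by
  have hsq : exp x ^ 2 * exp (-x) = exp x := by
    rw [sq, mul_assoc, ← exp_add, add_neg_cancel, exp_zero, mul_one]
  have h2x : 1 + 2 * x ≤ exp x ^ 2 := by
    simpa [← exp_nat_mul, add_comm] using add_one_le_exp (2 * x)
  rw [sinh_eq]
  nlinarith [mul_le_mul_of_nonneg_right h2x (exp_pos (-x)).le]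

theorem mul_coth_le {x : ℝ} (hx : 0 < x) : x * coth x ≤ x + 1 := by
  have hs : 0 < sinh x := sinh_pos_iff.mpr hx
  rw [coth, mul_div_assoc', div_le_iff₀ hs]
  nlinarith [mul_exp_neg_le_sinh x, cosh_sub_sinh x]

theorem tendsto_mul_coth_nhdsGT_zero : Tendsto (fun t => t * coth t) (𝓝[>] 0) (𝓝 1) := by
  have hslope : Tendsto (fun t => sinh t / t) (𝓝[>] 0) (𝓝 1) := by
    have hd := hasDerivAt_iff_tendsto_slope.mp (hasDerivAt_sinh 0)
    rw [cosh_zero] at hd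
    refine (hd.mono_left (nhdsWithin_mono 0 fun t ht => ne_of_gt ht)).congr fun t => ?_
    simp [slope_def_field, sinh_zero]
  have hcosh : Tendsto cosh (𝓝[>] 0) (𝓝 1) := by
    simpa using continuous_cosh.continuousWithinAt.tendsto (s := Set.Ioi 0) (x := 0)
  refine (div_one (1 : ℝ) ▸ hcosh.div hslope one_ne_zero).congr fun t => ?_
  rw [Pi.div_apply, coth, div_div_eq_mul_div]
  ring

end Real

theorem tendsto_mul_integral_coth_mul {α : Type*} [MeasurableSpace α] {μ : Measure α}
    {ω g : α → ℝ} (hω : Measurable ω) (hω_pos : ∀ᵐ k ∂μ, 0 < ω k) (hg : Integrable g μ)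
    (hgω : Integrable (fun k => g k / ω k) μ) :
    Tendsto (fun ε => ε * ∫ k, coth (ε * ω k) * g k ∂μ) (𝓝[>] 0)
      (𝓝 (∫ k, g k / ω k ∂μ)) := by
  have hF : Tendsto (fun ε => ∫ k, ε * ω k * coth (ε * ω k) * (g k / ω k) ∂μ) (𝓝[>] 0)
      (𝓝 (∫ k, g k / ω k ∂μ)) := by
    refine tendsto_integral_filter_of_dominated_convergence (fun k => ‖g k‖ + ‖g k / ω k‖)
      (Eventually.of_forall fun ε => ?_) ?_ (hg.norm.add hgω.norm) ?_
    · exact ((measurable_const.mul hω).mul (measurable_coth.comp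
        (measurable_const.mul hω))).aestronglyMeasurable.mul hgω.aestronglyMeasurable
    · filter_upwards [Ioc_mem_nhdsGT one_pos] with ε ⟨hε, hε1⟩
      filter_upwards [hω_pos] with k hk
      have hεω := mul_pos hε hk
      calc ‖ε * ω k * coth (ε * ω k) * (g k / ω k)‖
          = ε * ω k * coth (ε * ω k) * ‖g k / ω k‖ := by
            rw [norm_mul, Real.norm_of_nonneg (mul_pos hεω (coth_pos hεω)).le]
        _ ≤ (ε * ω k + 1) * ‖g k / ω k‖ := by gcongr; exact mul_coth_le hεω
        _ = ε * ‖g k‖ + ‖g k / ω k‖ := by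
            rw [norm_div, Real.norm_of_nonneg hk.le]; field_simp
        _ ≤ ‖g k‖ + ‖g k / ω k‖ := by gcongr; exact mul_le_of_le_one_left (norm_nonneg _) hε1
    · filter_upwards [hω_pos] with k hk
      have hscale : Tendsto (fun ε => ε * ω k) (𝓝[>] 0) (𝓝[>] 0) := by
        simpa only [mul_comm] using tendsto_iff_comap.mpr (comap_mulLeft_nhdsGT_zero hk).ge
      simpa using (tendsto_mul_coth_nhdsGT_zero.comp hscale).mul_const (g k / ω k)
  refine hF.congr fun ε => ?_
  rw [← integral_const_mul]
  refine integral_congr_ae ?_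
  filter_upwards [hω_pos] with k hk
  field_simp

theorem thermal_classical_limit_general
    (β' : ℝ) (hβ' : 0 < β')
    (ω : EuclideanSpace ℝ (Fin 3) → ℝ) (hω_meas : Measurable ω)
    (hω_pos : ∀ᵐ k : EuclideanSpace ℝ (Fin 3), 0 < ω k)
    (h : EuclideanSpace ℝ (Fin 3) → ℂ)
    (hh2 : Integrable (fun k => ‖h k‖ ^ 2))
    (hh2ω : Integrable (fun k => ‖h k‖ ^ 2 / ω k)) :
    Tendsto
      (fun ε : ℝ => ε * ∫ k, Real.coth (β' * ε * ω k / 2) * ‖h k‖ ^ 2)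
      (nhdsWithin 0 (Set.Ioi 0))
      (nhds ((2 / β') * ∫ k, ‖h k‖ ^ 2 / ω k)) := by
  have harg (ε : ℝ) (k) : ε * (β' * ω k / 2) = β' * ε * ω k / 2 := by ring
  have hrescale (k) : ‖h k‖ ^ 2 / (β' * ω k / 2) = 2 / β' * (‖h k‖ ^ 2 / ω k) := by ring
  have hlim := tendsto_mul_integral_coth_mul (hω_meas.const_mul β' |>.div_const 2)
    (by filter_upwards [hω_pos] with k hk; positivity) hh2
    (by simpa only [hrescale] using hh2ω.const_mul (2 / β'))
  simpa only [harg, hrescale, integral_const_mul] using hlim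

/-- **Classical (high-temperature) limit of the thermal characteristic-function exponent.**
If `ω > 0` a.e., `|h|²` and `|h|²/ω` are integrable on `ℝ³`, then
`ε ∫ coth(β'εω(k)/2)|h(k)|² dk → (2/β') ∫ |h(k)|²/ω(k) dk` as `ε → 0⁺`. -/
theorem thermal_classical_limit
    (β' : ℝ) (hβ' : 0 < β')
    (ω : EuclideanSpace ℝ (Fin 3) → ℝ) (hω_meas : Measurable ω)
    (hω_pos : ∀ᵐ k : EuclideanSpace ℝ (Fin 3), 0 < ω k)
    (h : EuclideanSpace ℝ (Fin 3) → ℂ) (hh_meas : Measurable h)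
    (hh2 : Integrable (fun k => ‖h k‖ ^ 2))
    (hh2ω : Integrable (fun k => ‖h k‖ ^ 2 / ω k)) :
    Tendsto
      (fun ε : ℝ => ε * ∫ k, Real.coth (β' * ε * ω k / 2) * ‖h k‖ ^ 2)
      (nhdsWithin 0 (Set.Ioi 0))
      (nhds ((2 / β') * ∫ k, ‖h k‖ ^ 2 / ω k)) :=
  thermal_classical_limit_general β' hβ' ω hω_meas hω_pos h hh2 hh2ω
end

section
/- Let ω : ℝ³ → ℝ be measurable with ω(k) > 0 for almost every k, let f, g ∈ L²(ℝ³, ℂ), let λ, ω₀ ∈ ℝ, and define for t ∈ ℝ: g_t(k) = (1 − e^{iω(k)t}) g(k)/(i ω(k)), α_t = Re ∫_{ℝ³} e^{itω(k)} · conj(f(k)) · g(k) dk, and φ(t) = (ω₀/2)·t − (λ/√2)·Re ∫_{ℝ³} conj(f(k)) · g_t(k) dk. Then the matrix-valued function U(t) = diag(e^{−iφ(t)}, e^{iφ(t)}) satisfies U(0) = I and the differential equation U'(t) = −i·((ω₀/2) + (λ/√2)·α_t)·σ_z·U(t) for all t ∈ ℝ. -/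
/-!
Since `U t = diag(e^{-iφ t}, e^{iφ t})`, it solves `U' = -i φ' σ_z U`, so everything reduces to
`φ' t = ω₀/2 + (λ/√2) α_t`. The integrand of `φ` is `conj f · g` times the kernel
`(1 - e^{iωt})/(iω)`, whose modulus is at most `|t|` and whose `t`-derivative `-e^{iωt}` has
modulus one; as `conj f · g` is integrable by Cauchy–Schwarz, differentiation under the integral
sign is dominated by `|f| |g|`.
-/

open MeasureTheory Complex Matrix
open scoped Matrix.Norms.L2Operator

lemma norm_one_sub_exp_I_mul_div_le (w t : ℝ) : ‖(1 - exp (I * w * t)) / (I * w)‖ ≤ |t| := by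
  rcases eq_or_ne w 0 with rfl | hw
  · simp
  have hw' : 0 < |w| := abs_pos.2 hw
  have hexp : ‖1 - exp (I * w * t)‖ ≤ |w * t| := by
    simpa [norm_sub_rev, mul_assoc] using Real.norm_exp_I_mul_ofReal_sub_one_le (x := w * t)
  rw [norm_div, norm_mul, norm_I, one_mul, norm_real, Real.norm_eq_abs, div_le_iff₀ hw']
  simpa [abs_mul, mul_comm] using hexp

lemma hasDerivAt_one_sub_exp_I_mul_div {w : ℝ} (hw : w ≠ 0) (t : ℝ) :
    HasDerivAt (fun s : ℝ => (1 - exp (I * w * s)) / (I * w)) (-exp (I * t * w)) t := by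
  have hIw : I * (w : ℂ) ≠ 0 := mul_ne_zero I_ne_zero (ofReal_ne_zero.2 hw)
  have hlin : HasDerivAt (fun s : ℝ => I * w * (s : ℂ)) (I * w) t := by
    simpa using (hasDerivAt_id t).ofReal_comp.const_mul (I * (w : ℂ))
  refine ((hlin.cexp.const_sub 1).div_const (I * w)).congr_deriv ?_
  rw [neg_div, mul_div_cancel_right₀ _ hIw, mul_right_comm]

theorem hasDerivAt_integral_mul_one_sub_exp_I_mul_div {α : Type*} [MeasurableSpace α]
    {μ : Measure α} {h : α → ℂ} (hh : Integrable h μ) {ω : α → ℝ} (hω_meas : AEMeasurable ω μ)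
    (hω : ∀ᵐ k ∂μ, ω k ≠ 0) (t : ℝ) :
    HasDerivAt (fun s : ℝ => ∫ k, h k * ((1 - exp (I * ω k * s)) / (I * ω k)) ∂μ)
      (-∫ k, exp (I * t * ω k) * h k ∂μ) t := by
  have hωC : AEMeasurable (fun k => (ω k : ℂ)) μ := measurable_ofReal.comp_aemeasurable hω_meas
  have hF_meas : ∀ s : ℝ, AEStronglyMeasurable
      (fun k => h k * ((1 - exp (I * ω k * s)) / (I * ω k))) μ := fun s =>
    hh.aestronglyMeasurable.mul <| AEMeasurable.aestronglyMeasurable <|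
      (aemeasurable_const.sub (((hωC.const_mul I).mul_const _).cexp)).div (hωC.const_mul I)
  have hF_bound : ∀ s : ℝ, ∀ k, ‖h k * ((1 - exp (I * ω k * s)) / (I * ω k))‖ ≤ |s| * ‖h k‖ :=
    fun s k => by
      rw [norm_mul, mul_comm |s|]
      exact mul_le_mul_of_nonneg_left (norm_one_sub_exp_I_mul_div_le _ _) (norm_nonneg _)
  have hexp_norm : ∀ s : ℝ, ∀ k, ‖exp (I * s * ω k)‖ = 1 := fun s k => by simp [norm_exp]
  have := hasDerivAt_integral_of_dominated_loc_of_deriv_le (μ := μ) (x₀ := t)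
    (F' := fun s k => -(exp (I * s * ω k) * h k)) (bound := fun k => ‖h k‖)
    Filter.univ_mem (.of_forall hF_meas)
    ((hh.norm.const_mul |t|).mono' (hF_meas t) (.of_forall (hF_bound t)))
    ((((hωC.const_mul _).cexp).aestronglyMeasurable.mul hh.aestronglyMeasurable).neg)
    (.of_forall fun k s _ => by simp [hexp_norm]) hh.norm
    (hω.mono fun k hk s _ =>
      ((hasDerivAt_one_sub_exp_I_mul_div hk s).const_mul (h k)).congr_deriv (by ring))
  rw [← integral_neg]
  exact this.2

lemma hasDerivAt_matrix_fin_two_diag {a b : ℝ → ℂ} {a' b' : ℂ} {t : ℝ}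
    (ha : HasDerivAt a a' t) (hb : HasDerivAt b b' t) :
    HasDerivAt (fun s => !![a s, 0; 0, b s]) !![a', 0; 0, b'] t := by
  let e₁ : Matrix (Fin 2) (Fin 2) ℂ := !![1, 0; 0, 0]
  let e₂ : Matrix (Fin 2) (Fin 2) ℂ := !![0, 0; 0, 1]
  have hsplit : ∀ x y : ℂ, !![x, 0; 0, y] = x • e₁ + y • e₂ := fun x y => by
    ext i j
    fin_cases i <;> fin_cases j <;> simp [e₁, e₂]
  rw [hsplit, funext fun s => hsplit (a s) (b s)]
  exact (ha.smul_const e₁).add (hb.smul_const e₂)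

theorem hasDerivAt_diag_exp_neg_I_mul_exp_I_mul {φ : ℝ → ℝ} {φ' t : ℝ} (hφ : HasDerivAt φ φ' t) :
    HasDerivAt (fun s => !![exp (-I * φ s), 0; 0, exp (I * φ s)])
      ((-(I * φ')) • (!![1, 0; 0, -1] * !![exp (-I * φ t), 0; 0, exp (I * φ t)])) t := by
  have hφC := hφ.ofReal_comp
  convert hasDerivAt_matrix_fin_two_diag (hφC.const_mul (-I)).cexp (hφC.const_mul I).cexp using 1
  ext i j
  fin_cases i <;> fin_cases j <;> simp <;> ring

/-- **Explicit solution of the quasi-classical Schrödinger equation for the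
energy-conserving spin-boson model.**  With `g_t(k) = (1−e^{iω(k)t}) g(k)/(iω(k))`,
`α_t = Re ∫ e^{itω(k)} conj(f(k)) g(k) dk` and
`φ(t) = (ω₀/2)t − (λ/√2) Re ∫ conj(f(k)) g_t(k) dk`, the diagonal unitary
`U(t) = diag(e^{−iφ(t)}, e^{iφ(t)})` satisfies `U(0) = 1` and
`U'(t) = −i((ω₀/2) + (λ/√2)α_t) σ_z U(t)`. -/
theorem energy_conserving_explicit_solution
    (ω : EuclideanSpace ℝ (Fin 3) → ℝ) (hω_meas : Measurable ω)
    (hω_pos : ∀ᵐ k : EuclideanSpace ℝ (Fin 3), 0 < ω k)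
    (f g : EuclideanSpace ℝ (Fin 3) → ℂ)
    (hf : MemLp f 2 (volume : Measure (EuclideanSpace ℝ (Fin 3))))
    (hg : MemLp g 2 (volume : Measure (EuclideanSpace ℝ (Fin 3))))
    (lam ω₀ : ℝ)
    (gt : ℝ → EuclideanSpace ℝ (Fin 3) → ℂ)
    (hgt : ∀ t k, gt t k = (1 - Complex.exp (I * (ω k : ℂ) * (t : ℂ))) * g k / (I * (ω k : ℂ)))
    (α : ℝ → ℝ)
    (hα : ∀ t, α t = (∫ k, Complex.exp (I * (t : ℂ) * (ω k : ℂ)) * (starRingEnd ℂ) (f k) * g k).re)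
    (φ : ℝ → ℝ)
    (hφ : ∀ t, φ t = ω₀ / 2 * t - lam / Real.sqrt 2 * (∫ k, (starRingEnd ℂ) (f k) * gt t k).re)
    (σz : Matrix (Fin 2) (Fin 2) ℂ) (hσz : σz = !![1, 0; 0, -1])
    (U : ℝ → Matrix (Fin 2) (Fin 2) ℂ)
    (hU : ∀ t, U t = !![Complex.exp (-I * (φ t : ℂ)), 0; 0, Complex.exp (I * (φ t : ℂ))]) :
    U 0 = 1 ∧
    ∀ t : ℝ, HasDerivAt U
      ((-(I * (((ω₀ : ℂ) / 2) + ((lam : ℂ) / (Real.sqrt 2 : ℂ)) * (α t : ℂ)))) • (σz * U t)) t := by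
  have hfg : Integrable (fun k => (starRingEnd ℂ) (f k) * g k) := hf.star.integrable_mul hg
  have hgt' : ∀ t k, (starRingEnd ℂ) (f k) * gt t k
      = (starRingEnd ℂ) (f k) * g k * ((1 - exp (I * ω k * t)) / (I * ω k)) := fun t k => by
    rw [hgt]; ring
  have hφ' : ∀ t, HasDerivAt φ (ω₀ / 2 + lam / Real.sqrt 2 * α t) t := fun t => by
    have hint := hasDerivAt_integral_mul_one_sub_exp_I_mul_div hfg hω_meas.aemeasurable
      (hω_pos.mono fun k hk => hk.ne') t
    simp only [← hgt'] at hint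
    have hre : HasDerivAt (fun s => (∫ k, (starRingEnd ℂ) (f k) * gt s k).re) (-α t) t := by
      refine (reCLM.hasFDerivAt.comp_hasDerivAt t hint).congr_deriv ?_
      simp [hα, mul_assoc]
    rw [funext hφ]
    exact (((hasDerivAt_id t).const_mul (ω₀ / 2)).sub
      (hre.const_mul (lam / Real.sqrt 2))).congr_deriv (by ring)
  refine ⟨?_, fun t => ?_⟩
  · have hφ0 : φ 0 = 0 := by simp [hφ, hgt]
    rw [hU, hφ0, one_fin_two]
    simp
  · rw [funext hU, hσz]
    convert hasDerivAt_diag_exp_neg_I_mul_exp_I_mul (hφ' t) using 3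
    push_cast
    ring
end
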